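/- Suppose {a_n}_{n=0}^∞ is a Stieltjes moment sequence with representing measure μ, κ is an integer ≥ 2, {a_n^{1/κ}}_{n=0}^∞ is a Stieltjes moment sequence with representing measure ν, and μ((θ1,θ2)) = 0 for some real θ1, θ2 with 0 ≤ θ1 < θ2. Then: (i) if {a_n}_{n=0}^∞ is determinate, then ν((θ1^{1/κ}, θ2^{1/κ})) = 0; (ii) if θ2 ≤ θ3 := sup supp μ < ∞, then ν(((θ1/θ3)·θ3^{1/κ}, (θ2/θ3)·θ3^{1/κ})) = 0. -/

import Mathlib

/-! If `ν` represents `a ^ (1/κ)`, then the `κ`-th multiplicative convolution power of `ν` (the law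
of a product of `κ` independent `ν`-distributed variables) represents `a`. It equals `μ` when `a`
is determinate, and `a` is determinate when `μ` has compact support, since polynomials are then
dense (Weierstrass). An interval `[p, q]` charged by `ν` makes the convolution power charge
`[p ^ κ, q ^ κ]`; in (ii), one factor in `[p, q]` and `κ - 1` factors near
`sup supp ν = θ3 ^ (1/κ)` (the top of a support is read off from the growth of the moments) make
it charge an interval just inside `[p θ3 ^ (1 - 1/κ), q θ3 ^ (1 - 1/κ)]`. Either way the gap
`(θ1, θ2)` of `μ` yields the gap of `ν`.
-/

open MeasureTheory

/-- The closed support of a Borel measure: the set of points all of whose open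
neighbourhoods have positive measure. -/
def msupport {X : Type*} [TopologicalSpace X] [MeasurableSpace X] (μ : Measure X) : Set X :=
  {x | ∀ U : Set X, IsOpen U → x ∈ U → 0 < μ U}

/-- `μ` is a representing measure (on `[0,∞)`, modelled as a measure on `ℝ` vanishing on
`(-∞,0)`) of the Stieltjes moment sequence `a`. -/
def IsRepMeas (a : ℕ → ℝ) (μ : Measure ℝ) : Prop :=
  (∀ n, 0 ≤ a n) ∧ μ (Set.Iio 0) = 0 ∧
    ∀ n : ℕ, ∫⁻ x, ENNReal.ofReal (x ^ n) ∂μ = ENNReal.ofReal (a n)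

/-- `a` is a Stieltjes moment sequence. -/
def IsStieltjes (a : ℕ → ℝ) : Prop :=
  ∃ μ : Measure ℝ, IsRepMeas a μ

/-- A Stieltjes moment sequence is determinate if it has a unique representing measure. -/
def IsDeterminate (a : ℕ → ℝ) : Prop :=
  ∀ μ ν : Measure ℝ, IsRepMeas a μ → IsRepMeas a ν → μ = ν

open Set Filter Topology Polynomial

namespace MeasureTheory.Measure

noncomputable def mconvPow {M : Type*} [Monoid M] [MeasurableSpace M] (μ : Measure M) :
    ℕ → Measure M
  | 0 => dirac 1
  | n + 1 => μ ∗ₘ μ.mconvPow n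

instance {M : Type*} [Monoid M] [MeasurableSpace M] (μ : Measure M) [IsFiniteMeasure μ] (n : ℕ) :
    IsFiniteMeasure (μ.mconvPow n) := by
  induction n with
  | zero => exact inferInstanceAs (IsFiniteMeasure (dirac 1))
  | succ n ih => exact inferInstanceAs (IsFiniteMeasure (μ ∗ₘ μ.mconvPow n))

lemma measure_Icc_mul_le_mconv {μ ρ : Measure ℝ} [SFinite ρ] {p q s t : ℝ} (hp : 0 ≤ p)
    (hs : 0 ≤ s) : μ (Icc p q) * ρ (Icc s t) ≤ (μ ∗ₘ ρ) (Icc (p * s) (q * t)) := by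
  rw [mconv, map_apply measurable_mul measurableSet_Icc, ← prod_prod]
  refine measure_mono ?_
  rintro ⟨x, y⟩ ⟨⟨hpx, hxq⟩, hsy, hyt⟩
  exact ⟨mul_le_mul hpx hsy hs (hp.trans hpx),
    mul_le_mul hxq hyt (hs.trans hsy) ((hp.trans hpx).trans hxq)⟩

lemma measure_Icc_pow_le_mconvPow {ν : Measure ℝ} [IsFiniteMeasure ν] {c d : ℝ} (hc : 0 ≤ c)
    (m : ℕ) : ν (Icc c d) ^ m ≤ ν.mconvPow m (Icc (c ^ m) (d ^ m)) := by
  induction m with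
  | zero => simp [mconvPow]
  | succ m ih =>
    calc ν (Icc c d) ^ (m + 1) ≤ ν (Icc c d) * ν.mconvPow m (Icc (c ^ m) (d ^ m)) := by
          rw [pow_succ']; gcongr
      _ ≤ ν.mconvPow (m + 1) (Icc (c ^ (m + 1)) (d ^ (m + 1))) := by
          rw [pow_succ', pow_succ']
          exact measure_Icc_mul_le_mconv hc (pow_nonneg hc m)

end MeasureTheory.Measure

open MeasureTheory Measure

lemma msupport_eq_support {X : Type*} [TopologicalSpace X] [MeasurableSpace X] (μ : Measure X) :
    msupport μ = μ.support := by
  rw [support_eq_forall_isOpen]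
  ext x
  exact forall_congr' fun U => forall_comm

lemma isLUB_msupport_iff {μ : Measure ℝ} {θ : ℝ} :
    IsLUB (msupport μ) θ ↔ ∀ r, μ (Ioi r) = 0 ↔ θ ≤ r := by
  have upper : ∀ r, μ (Ioi r) = 0 ↔ r ∈ upperBounds (msupport μ) := fun r =>
    ⟨fun h x hx => not_lt.1 fun hrx => (hx _ isOpen_Ioi hrx).ne' h,
      fun h => measure_mono_null (show Ioi r ⊆ μ.supportᶜ from fun x hx hxμ =>
        not_le.2 hx (h ((msupport_eq_support μ).symm ▸ hxμ))) measure_compl_support⟩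
  simp_rw [isLUB_iff_le_iff, upper]
  exact forall_congr' fun r => Iff.comm

lemma exists_Icc_subset_Ioo_measure_ne_zero {ν : Measure ℝ} [ν.InnerRegular] {u v : ℝ}
    (h : ν (Ioo u v) ≠ 0) : ∃ p q, u < p ∧ q < v ∧ p ≤ q ∧ ν (Icc p q) ≠ 0 := by
  obtain ⟨K, hKuv, hK, hνK⟩ := measurableSet_Ioo.exists_lt_isCompact (pos_iff_ne_zero.2 h)
  have hne : K.Nonempty := nonempty_of_measure_ne_zero hνK.ne'
  refine ⟨sInf K, sSup K, (hKuv (hK.sInf_mem hne)).1, (hKuv (hK.sSup_mem hne)).2,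
    csInf_le_csSup hne hK.bddBelow hK.bddAbove, ?_⟩
  exact (hνK.trans_le (measure_mono (subset_Icc_csInf_csSup hK.bddBelow hK.bddAbove))).ne'

lemma measure_Ioi_eq_zero_iff_ae_le {α : Type*} [LinearOrder α] [MeasurableSpace α]
    {μ : Measure α} {r : α} :
    μ (Ioi r) = 0 ↔ ∀ᵐ x ∂μ, x ≤ r := by
  rw [ae_iff]
  simp only [not_le]
  rfl

lemma measure_Iio_eq_zero_iff_ae_ge {α : Type*} [LinearOrder α] [MeasurableSpace α]
    {μ : Measure α} {r : α} :
    μ (Iio r) = 0 ↔ ∀ᵐ x ∂μ, r ≤ x := by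
  rw [ae_iff]
  simp only [not_le]
  rfl

lemma measure_Ioi_eq_zero_of_forall_lt {μ : Measure ℝ} {r : ℝ}
    (h : ∀ s, r < s → μ (Ioi s) = 0) : μ (Ioi r) = 0 := by
  have : Ioi r = ⋃ q : {q : ℚ // r < q}, Ioi (q : ℝ) := by
    ext x
    simp only [mem_Ioi, mem_iUnion]
    refine ⟨fun hx => ?_, fun ⟨q, hq⟩ => q.2.trans hq⟩
    obtain ⟨q, hrq, hqx⟩ := exists_rat_btwn hx
    exact ⟨⟨q, hrq⟩, hqx⟩
  rw [this]
  exact measure_iUnion_null fun q => h _ q.2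

lemma measure_Ioi_eq_zero_of_lintegral_pow_le {μ : Measure ℝ} {C r : ℝ} (hr : 0 ≤ r)
    (h : ∀ n : ℕ, ∫⁻ x, ENNReal.ofReal (x ^ n) ∂μ ≤ ENNReal.ofReal (C * r ^ n)) :
    μ (Ioi r) = 0 := by
  refine measure_Ioi_eq_zero_of_forall_lt fun s hs => ?_
  have hs0 : 0 < s := hr.trans_lt hs
  have markov : ∀ n : ℕ, μ (Ioi s) ≤ ENNReal.ofReal (C * (r / s) ^ n) := fun n => by
    have hsn : 0 < s ^ n := pow_pos hs0 n
    rw [div_pow, ← mul_div_assoc, ENNReal.ofReal_div_of_pos hsn,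
      ENNReal.le_div_iff_mul_le (by simp [hsn]) (by simp), mul_comm]
    calc ENNReal.ofReal (s ^ n) * μ (Ioi s) = ∫⁻ _ in Ioi s, ENNReal.ofReal (s ^ n) ∂μ :=
          (setLIntegral_const _ _).symm
      _ ≤ ∫⁻ x in Ioi s, ENNReal.ofReal (x ^ n) ∂μ :=
          setLIntegral_mono (by fun_prop) fun x hx =>
            ENNReal.ofReal_le_ofReal (pow_le_pow_left₀ hs0.le (le_of_lt hx) n)
      _ ≤ ENNReal.ofReal (C * r ^ n) := (setLIntegral_le_lintegral _ _).trans (h n)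
  have decay : Tendsto (fun n : ℕ => ENNReal.ofReal (C * (r / s) ^ n)) atTop (𝓝 0) := by
    simpa using ENNReal.tendsto_ofReal ((tendsto_pow_atTop_nhds_zero_of_lt_one
      (div_nonneg hr hs0.le) ((div_lt_one hs0).2 hs)).const_mul C)
  exact nonpos_iff_eq_zero.1 (ge_of_tendsto' decay markov)

section CompactSupport

variable {μ ρ : Measure ℝ} [IsFiniteMeasure μ] [IsFiniteMeasure ρ] {A B : ℝ}

lemma Continuous.integrable_of_ae_mem_Icc {f : ℝ → ℝ} (hf : Continuous f)
    (hμ : ∀ᵐ x ∂μ, x ∈ Icc A B) : Integrable f μ := by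
  obtain ⟨C, hC⟩ := isCompact_Icc.exists_bound_of_continuousOn hf.continuousOn
  exact .of_bound hf.aestronglyMeasurable C (hμ.mono hC)

lemma integral_eval_eq_of_integral_pow_eq (hμ : ∀ᵐ x ∂μ, x ∈ Icc A B)
    (hρ : ∀ᵐ x ∂ρ, x ∈ Icc A B) (h : ∀ n : ℕ, ∫ x, x ^ n ∂μ = ∫ x, x ^ n ∂ρ) (P : ℝ[X]) :
    ∫ x, P.eval x ∂μ = ∫ x, P.eval x ∂ρ := by
  induction P using Polynomial.induction_on' with
  | add p q hp hq =>
    simp only [eval_add]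
    rw [integral_add (p.continuous.integrable_of_ae_mem_Icc hμ)
        (q.continuous.integrable_of_ae_mem_Icc hμ),
      integral_add (p.continuous.integrable_of_ae_mem_Icc hρ)
        (q.continuous.integrable_of_ae_mem_Icc hρ), hp, hq]
  | monomial n c =>
    simp only [eval_monomial]
    rw [integral_const_mul, integral_const_mul, h n]

theorem ext_of_integral_pow_eq (hμ : ∀ᵐ x ∂μ, x ∈ Icc A B) (hρ : ∀ᵐ x ∂ρ, x ∈ Icc A B)
    (h : ∀ n : ℕ, ∫ x, x ^ n ∂μ = ∫ x, x ^ n ∂ρ) : μ = ρ := by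
  refine ext_of_forall_integral_eq_of_IsFiniteMeasure fun f =>
    eq_of_forall_dist_le fun δ hδ => ?_
  set M := μ.real univ + ρ.real univ
  have hM : 0 ≤ M := by positivity
  obtain ⟨P, hP⟩ := exists_polynomial_near_of_continuousOn A B f f.continuous.continuousOn
    (δ / (M + 1)) (by positivity)
  have approx : ∀ (m : Measure ℝ) [IsFiniteMeasure m], (∀ᵐ x ∂m, x ∈ Icc A B) →
      dist (∫ x, P.eval x ∂m) (∫ x, f x ∂m) ≤ δ / (M + 1) * m.real univ := by
    intro m _ hm
    rw [dist_eq_norm, ← integral_sub (P.continuous.integrable_of_ae_mem_Icc hm)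
      (f.continuous.integrable_of_ae_mem_Icc hm)]
    exact norm_integral_le_of_norm_le_const (hm.mono fun x hx => (hP x hx).le)
  calc dist (∫ x, f x ∂μ) (∫ x, f x ∂ρ)
      ≤ dist (∫ x, P.eval x ∂μ) (∫ x, f x ∂μ) + dist (∫ x, P.eval x ∂ρ) (∫ x, f x ∂ρ) := by
        rw [integral_eval_eq_of_integral_pow_eq hμ hρ h P]
        exact dist_triangle_left _ _ _
    _ ≤ δ / (M + 1) * M := by linarith [approx μ hμ, approx ρ hρ]
    _ ≤ δ := by
        rw [div_mul_eq_mul_div, div_le_iff₀ (by positivity)]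
        nlinarith

end CompactSupport

namespace IsRepMeas

variable {a b : ℕ → ℝ} {μ ρ : Measure ℝ}

lemma measure_univ_eq (h : IsRepMeas a μ) : μ univ = ENNReal.ofReal (a 0) := by
  simpa using h.2.2 0

lemma isFiniteMeasure (h : IsRepMeas a μ) : IsFiniteMeasure μ :=
  ⟨h.measure_univ_eq ▸ ENNReal.ofReal_lt_top⟩

lemma ae_nonneg (h : IsRepMeas a μ) : ∀ᵐ x ∂μ, 0 ≤ x :=
  measure_Iio_eq_zero_iff_ae_ge.1 h.2.1

lemma integral_pow (h : IsRepMeas a μ) (n : ℕ) : ∫ x, x ^ n ∂μ = a n := by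
  rw [integral_eq_lintegral_of_nonneg_ae (h.ae_nonneg.mono fun x hx => pow_nonneg hx n)
    (by fun_prop), h.2.2 n, ENNReal.toReal_ofReal (h.1 n)]

lemma mconv (hμ : IsRepMeas a μ) (hρ : IsRepMeas b ρ) :
    IsRepMeas (fun n => a n * b n) (μ ∗ₘ ρ) := by
  have := hρ.isFiniteMeasure
  have hprod : ∀ᵐ p ∂μ.prod ρ, 0 ≤ p.1 ∧ 0 ≤ p.2 :=
    (quasiMeasurePreserving_fst.ae hμ.ae_nonneg).and (quasiMeasurePreserving_snd.ae hρ.ae_nonneg)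
  refine ⟨fun n => mul_nonneg (hμ.1 n) (hρ.1 n), ?_, fun n => ?_⟩
  · have : ∀ᵐ x ∂μ ∗ₘ ρ, 0 ≤ x := by
      rw [Measure.mconv, ae_map_iff (by fun_prop) measurableSet_Ici]
      exact hprod.mono fun p hp => mul_nonneg hp.1 hp.2
    exact measure_Iio_eq_zero_iff_ae_ge.2 this
  · calc ∫⁻ x, ENNReal.ofReal (x ^ n) ∂μ ∗ₘ ρ
        = ∫⁻ p, ENNReal.ofReal (p.1 ^ n) * ENNReal.ofReal (p.2 ^ n) ∂μ.prod ρ := by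
          rw [lintegral_mconv_eq_lintegral_prod (by fun_prop)]
          refine lintegral_congr_ae (hprod.mono fun p hp => ?_)
          dsimp only
          rw [mul_pow, ENNReal.ofReal_mul (pow_nonneg hp.1 n)]
      _ = ENNReal.ofReal (a n * b n) := by
          rw [lintegral_prod_mul (f := fun x => ENNReal.ofReal (x ^ n))
            (g := fun x => ENNReal.ofReal (x ^ n)) (by fun_prop) (by fun_prop), hμ.2.2 n, hρ.2.2 n,
            ENNReal.ofReal_mul (hμ.1 n)]

lemma mconvPow (hμ : IsRepMeas a μ) (m : ℕ) : IsRepMeas (fun n => a n ^ m) (μ.mconvPow m) := by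
  induction m with
  | zero => simp [IsRepMeas, Measure.mconvPow]
  | succ m ih => simpa only [pow_succ', Measure.mconvPow] using hμ.mconv ih

lemma measure_Ioi_eq_zero_iff (h : IsRepMeas a μ) {r : ℝ} (hr : 0 ≤ r) :
    μ (Ioi r) = 0 ↔ ∀ n, a n ≤ a 0 * r ^ n := by
  refine ⟨fun hμr n => ?_,
    fun hmom => measure_Ioi_eq_zero_of_lintegral_pow_le (C := a 0) hr fun n => ?_⟩
  · have hle : ∀ᵐ x ∂μ, ENNReal.ofReal (x ^ n) ≤ ENNReal.ofReal (r ^ n) := by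
      filter_upwards [h.ae_nonneg, measure_Ioi_eq_zero_iff_ae_le.1 hμr] with x hx hxr
      exact ENNReal.ofReal_le_ofReal (pow_le_pow_left₀ hx hxr n)
    have := (lintegral_mono_ae hle).trans_eq (lintegral_const _)
    rw [h.2.2 n, h.measure_univ_eq, ← ENNReal.ofReal_mul (pow_nonneg hr n),
      ENNReal.ofReal_le_ofReal_iff (mul_nonneg (pow_nonneg hr n) (h.1 0))] at this
    linarith
  · rw [h.2.2 n]
    exact ENNReal.ofReal_le_ofReal (hmom n)

lemma ae_mem_Icc (h : IsRepMeas a μ) {r : ℝ} (hr : μ (Ioi r) = 0) : ∀ᵐ x ∂μ, x ∈ Icc 0 r :=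
  h.ae_nonneg.and (measure_Ioi_eq_zero_iff_ae_le.1 hr)

theorem isDeterminate (hμ : IsRepMeas a μ) {r : ℝ} (hr : μ (Ioi r) = 0) : IsDeterminate a := by
  intro ρ₁ ρ₂ h₁ h₂
  have := h₁.isFiniteMeasure
  have := h₂.isFiniteMeasure
  have hr₀ : μ (Ioi (max r 0)) = 0 := measure_mono_null (Ioi_subset_Ioi (le_max_left r 0)) hr
  have supp : ∀ ρ, IsRepMeas a ρ → ∀ᵐ x ∂ρ, x ∈ Icc 0 (max r 0) := fun ρ hρ =>
    hρ.ae_mem_Icc ((hρ.measure_Ioi_eq_zero_iff (le_max_right r 0)).2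
      ((hμ.measure_Ioi_eq_zero_iff (le_max_right r 0)).1 hr₀))
  exact ext_of_integral_pow_eq (supp ρ₁ h₁) (supp ρ₂ h₂) fun n => by
    rw [h₁.integral_pow, h₂.integral_pow]

lemma isLUB_msupport_of_pow {m : ℕ} (hm : m ≠ 0) (hρ : IsRepMeas b ρ)
    (hμ : IsRepMeas (fun n => b n ^ m) μ) {w : ℝ} (hw : 0 < w)
    (h : IsLUB (msupport μ) (w ^ m)) : IsLUB (msupport ρ) w := by
  rw [isLUB_msupport_iff] at h ⊢
  have nonneg : ∀ r, 0 ≤ r → (ρ (Ioi r) = 0 ↔ w ≤ r) := fun r hr => by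
    rw [hρ.measure_Ioi_eq_zero_iff hr, ← pow_le_pow_iff_left₀ hw.le hr hm, ← h,
      hμ.measure_Ioi_eq_zero_iff (pow_nonneg hr m)]
    refine forall_congr' fun n => ?_
    rw [← pow_mul, mul_comm m n, pow_mul, ← mul_pow,
      pow_le_pow_iff_left₀ (hρ.1 n) (mul_nonneg (hρ.1 0) (pow_nonneg hr n)) hm]
  intro r
  rcases le_or_gt 0 r with hr | hr
  · exact nonneg r hr
  · refine iff_of_false (fun hρr => hw.not_ge ((nonneg 0 le_rfl).1 ?_)) (by linarith)
    exact measure_mono_null (Ioi_subset_Ioi hr.le) hρr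

end IsRepMeas

lemma measure_Ioo_eq_zero_of_mconvPow {ν : Measure ℝ} [IsFiniteMeasure ν] {m : ℕ} (hm : m ≠ 0)
    {u v : ℝ} (hu : 0 ≤ u) (h : ν.mconvPow m (Ioo (u ^ m) (v ^ m)) = 0) : ν (Ioo u v) = 0 := by
  by_contra hne
  obtain ⟨p, q, hup, hqv, hpq, hpos⟩ := exists_Icc_subset_Ioo_measure_ne_zero hne
  have hp : 0 ≤ p := hu.trans hup.le
  have hsub : Icc (p ^ m) (q ^ m) ⊆ Ioo (u ^ m) (v ^ m) := Icc_subset_Ioo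
    (pow_lt_pow_left₀ hup hu hm) (pow_lt_pow_left₀ hqv (hp.trans hpq) hm)
  exact pow_ne_zero m hpos (nonpos_iff_eq_zero.1
    ((measure_Icc_pow_le_mconvPow hp m).trans (h ▸ measure_mono hsub)))

lemma measure_Ioo_eq_zero_of_mconvPow_succ {ν : Measure ℝ} [IsFiniteMeasure ν] {k : ℕ}
    {s t w : ℝ} (hs : 0 ≤ s) (hsup : IsLUB (msupport ν) w)
    (h : ν.mconvPow (k + 1) (Ioo (s * w ^ k) (t * w ^ k)) = 0) : ν (Ioo s t) = 0 := by
  by_contra hne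
  obtain ⟨p, q, hsp, hqt, hpq, hpos⟩ := exists_Icc_subset_Ioo_measure_ne_zero hne
  have hp : 0 < p := hs.trans_lt hsp
  have hsw : s < w := not_le.1 fun hws => hne <| measure_mono_null Ioo_subset_Ioi_self
    ((isLUB_msupport_iff.1 hsup s).2 hws)
  have hw : 0 < w := hs.trans_lt hsw
  obtain ⟨c, ⟨hc, hpc⟩, hcw⟩ : ∃ c, (0 < c ∧ s * w ^ k < p * c ^ k) ∧ c < w := by
    have near : ∀ᶠ c in 𝓝 w, 0 < c ∧ s * w ^ k < p * c ^ k :=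
      (lt_mem_nhds hw).and ((continuous_const.mul (continuous_pow k)).continuousAt.eventually
        (lt_mem_nhds (mul_lt_mul_of_pos_right hsp (pow_pos hw k))))
    exact ((near.filter_mono nhdsWithin_le_nhds).and self_mem_nhdsWithin).exists (f := 𝓝[<] w)
  have htop : ν (Icc c w) ≠ 0 := fun hcw0 => not_le.2 hcw <| (isLUB_msupport_iff.1 hsup c).1 <|
    measure_mono_null Ioi_subset_Ioc_union_Ioi <| measure_union_null
      (measure_mono_null Ioc_subset_Icc_self hcw0) ((isLUB_msupport_iff.1 hsup w).2 le_rfl)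
  have hsub : Icc (p * c ^ k) (q * w ^ k) ⊆ Ioo (s * w ^ k) (t * w ^ k) :=
    Icc_subset_Ioo hpc (mul_lt_mul_of_pos_right hqt (pow_pos hw k))
  refine mul_ne_zero hpos (pow_ne_zero k htop) (nonpos_iff_eq_zero.1 ?_)
  calc ν (Icc p q) * ν (Icc c w) ^ k ≤ ν (Icc p q) * ν.mconvPow k (Icc (c ^ k) (w ^ k)) := by
        gcongr
        exact measure_Icc_pow_le_mconvPow hc.le k
    _ ≤ ν.mconvPow (k + 1) (Icc (p * c ^ k) (q * w ^ k)) :=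
        measure_Icc_mul_le_mconv hp.le (pow_nonneg hc.le k)
    _ ≤ 0 := h ▸ measure_mono hsub

theorem stmt8 (a : ℕ → ℝ) (μ ν : Measure ℝ) (κ : ℕ) (hκ : 2 ≤ κ)
    (hμ : IsRepMeas a μ)
    (hν : IsRepMeas (fun n => a n ^ (1 / (κ : ℝ))) ν)
    (θ1 θ2 : ℝ) (h0 : 0 ≤ θ1) (h12 : θ1 < θ2)
    (hhole : μ (Set.Ioo θ1 θ2) = 0) :
    (IsDeterminate a →
      ν (Set.Ioo (θ1 ^ (1 / (κ : ℝ))) (θ2 ^ (1 / (κ : ℝ)))) = 0) ∧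
    (∀ θ3 : ℝ, θ2 ≤ θ3 → IsLUB (msupport μ) θ3 →
      ν (Set.Ioo (θ1 / θ3 * θ3 ^ (1 / (κ : ℝ))) (θ2 / θ3 * θ3 ^ (1 / (κ : ℝ)))) = 0) := by
  have hκ0 : κ ≠ 0 := by omega
  have := hν.isFiniteMeasure
  have hroot : ∀ x : ℝ, 0 ≤ x → (x ^ (1 / (κ : ℝ))) ^ κ = x := fun x hx => by
    rw [one_div, Real.rpow_inv_natCast_pow hx hκ0]
  have hpow : (fun n => (a n ^ (1 / (κ : ℝ))) ^ κ) = a := funext fun n => hroot _ (hμ.1 n)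
  have hμ' : IsRepMeas (fun n => (a n ^ (1 / (κ : ℝ))) ^ κ) μ := by rwa [hpow]
  have hμν : IsDeterminate a → μ = ν.mconvPow κ := fun hdet =>
    hdet _ _ hμ (by rw [← hpow]; exact hν.mconvPow κ)
  refine ⟨fun hdet => ?_, fun θ3 h23 hlub => ?_⟩
  · refine measure_Ioo_eq_zero_of_mconvPow hκ0 (Real.rpow_nonneg h0 _) ?_
    rwa [hroot θ1 h0, hroot θ2 (h0.trans h12.le), ← hμν hdet]
  · have hθ3 : 0 < θ3 := by linarith
    set w := θ3 ^ (1 / (κ : ℝ))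
    have hwκ : w ^ κ = θ3 := hroot θ3 hθ3.le
    have hνsup : IsLUB (msupport ν) w :=
      hν.isLUB_msupport_of_pow hκ0 hμ' (Real.rpow_pos_of_pos hθ3 _) (hwκ ▸ hlub)
    have hdet := hμ.isDeterminate ((isLUB_msupport_iff.1 hlub θ3).2 le_rfl)
    obtain ⟨k, rfl⟩ : ∃ k, κ = k + 1 := ⟨κ - 1, by omega⟩
    have hscale : ∀ θ, θ / θ3 * w * w ^ k = θ := fun θ => by
      rw [mul_assoc, ← pow_succ', hwκ, div_mul_cancel₀ _ hθ3.ne']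
    refine measure_Ioo_eq_zero_of_mconvPow_succ (k := k) (by positivity) hνsup ?_
    rwa [hscale, hscale, ← hμν hdet]
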